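/- Let X, Y be Banach spaces and T : X → Y a bounded linear operator. If c ≥ 0 satisfies ‖(T y_k)|C_n‖ ≤ c ‖(y_k)|S_n‖ for all y_1,...,y_n ∈ X, then ‖(T x_k)|S_n‖ ≤ 2c ‖(x_k)|C_n‖ for all x_1,...,x_n ∈ X. In ideal-norm notation: ϱ(S_n, C_n) ≤ 2 ϱ(C_n, S_n) uniformly in n. -/

import Mathlib

/-!
Work over the full period `[0, 2π]`, where the integrands are even (so each integral is twice the
one over `[0, π]`) and translation invariant. Write `S z`, `C z` for the sine and cosine
polynomials with coefficients `z`, and `Φ z (t, s) = ∑ cos (k t) sin (k s) z k`.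

* `sin (k (t + s)) = cos (k t) sin (k s) + cos (k s) sin (k t)` gives
  `‖S z (t + s)‖² ≤ 2 ‖Φ z (t, s)‖² + 2 ‖Φ z (s, t)‖²`; integrating over the torus and swapping the
  variables in the second term gives `π ∫ ‖S z‖² ≤ 2 ∫∫ ‖Φ z‖²`, i.e. `ϱ(𝒮_n, 𝒮_n ⊗ 𝒞_n) ≤ √2`.
* For fixed `s`, the hypothesis applied to `y k = sin (k s) x k` bounds `∫ ‖Φ (T x) (·, s)‖²` by
  `c² ∫ ‖∑ sin (k t) sin (k s) x k‖² dt`, and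
  `sin (k t) sin (k s) = (cos (k (t - s)) - cos (k (t + s))) / 2` bounds this by `c² ∫ ‖C x‖²`,
  which is `ϱ(𝒮_n ⊗ 𝒮_n, 𝒞_n) ≤ √2` combined with tensor stability.
-/

open Real Finset Function MeasureTheory

theorem norm_add_sq_le_two_mul {F : Type*} [SeminormedAddCommGroup F] (a b : F) :
    ‖a + b‖ ^ 2 ≤ 2 * (‖a‖ ^ 2 + ‖b‖ ^ 2) :=
  (pow_le_pow_left₀ (norm_nonneg _) (norm_add_le a b) 2).trans add_sq_le

theorem sqrt_mul_le_mul_sqrt_mul_iff {κ a b c : ℝ} (hκ : 0 < κ) (hb : 0 ≤ b) (hc : 0 ≤ c) :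
    √(κ * a) ≤ c * √(κ * b) ↔ a ≤ c ^ 2 * b := by
  rw [← sqrt_sq hc, ← sqrt_mul (sq_nonneg c), sqrt_sq hc, sqrt_le_sqrt_iff (by positivity),
    mul_left_comm, mul_le_mul_iff_right₀ hκ]

section

variable {E : Type*} [NormedAddCommGroup E] [NormedSpace ℝ E]

theorem Function.Periodic.intervalIntegral_comp_add_right {f : ℝ → E} {T : ℝ}
    (hf : Periodic f T) (s : ℝ) : ∫ t in 0..T, f (t + s) = ∫ t in 0..T, f t := by
  rw [intervalIntegral.integral_comp_add_right, zero_add, add_comm,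
    hf.intervalIntegral_add_eq s 0, zero_add]

theorem Function.Periodic.intervalIntegral_comp_sub_right {f : ℝ → E} {T : ℝ}
    (hf : Periodic f T) (s : ℝ) : ∫ t in 0..T, f (t - s) = ∫ t in 0..T, f t := by
  simpa only [sub_eq_add_neg] using hf.intervalIntegral_comp_add_right (-s)

theorem Function.Periodic.intervalIntegral_eq_two_smul_of_even {f : ℝ → E} {a : ℝ}
    (hf : Periodic f (2 * a)) (heven : ∀ t, f (-t) = f t)
    (hint : ∀ b c, IntervalIntegrable f volume b c) :
    ∫ t in 0..2 * a, f t = (2 : ℝ) • ∫ t in 0..a, f t := by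
  have hneg : ∫ t in -a..0, f t = ∫ t in 0..a, f t := by
    simpa only [heven, neg_zero] using
      (intervalIntegral.integral_comp_neg (a := 0) (b := a) f).symm
  rw [← zero_add (2 * a), hf.intervalIntegral_add_eq 0 (-a), two_mul, neg_add_cancel_left,
    ← intervalIntegral.integral_add_adjacent_intervals (hint _ 0) (hint 0 _), hneg, two_smul]

noncomputable def cosPoly (n : ℕ) (z : ℕ → E) (t : ℝ) : E := ∑ k ∈ Icc 1 n, cos (k * t) • z k

noncomputable def sinPoly (n : ℕ) (z : ℕ → E) (t : ℝ) : E := ∑ k ∈ Icc 1 n, sin (k * t) • z k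

@[fun_prop]
theorem Continuous.cosPoly {α : Type*} [TopologicalSpace α] {n : ℕ} {z : α → ℕ → E}
    {g : α → ℝ} (hz : ∀ k, Continuous fun a => z a k) (hg : Continuous g) :
    Continuous fun a => cosPoly n (z a) (g a) := by
  unfold _root_.cosPoly
  fun_prop

@[fun_prop]
theorem Continuous.sinPoly {α : Type*} [TopologicalSpace α] {n : ℕ} {z : α → ℕ → E}
    {g : α → ℝ} (hz : ∀ k, Continuous fun a => z a k) (hg : Continuous g) :
    Continuous fun a => sinPoly n (z a) (g a) := by
  unfold _root_.sinPoly
  fun_prop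

section TrigPoly

variable (n : ℕ) (z : ℕ → E)

theorem cosPoly_neg (t : ℝ) : cosPoly n z (-t) = cosPoly n z t := by
  simp only [cosPoly, mul_neg, cos_neg]

theorem sinPoly_neg (t : ℝ) : sinPoly n z (-t) = -sinPoly n z t := by
  simp only [sinPoly, mul_neg, sin_neg, neg_smul, sum_neg_distrib]

theorem periodic_cosPoly : Periodic (cosPoly n z) (2 * π) := fun t => by
  simp only [cosPoly, mul_add, cos_add_nat_mul_two_pi]

theorem periodic_sinPoly : Periodic (sinPoly n z) (2 * π) := fun t => by
  simp only [sinPoly, mul_add, sin_add_nat_mul_two_pi]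

theorem sinPoly_add (t s : ℝ) :
    sinPoly n z (t + s) =
      cosPoly n (fun k => sin (k * s) • z k) t + cosPoly n (fun k => sin (k * t) • z k) s := by
  simp only [sinPoly, cosPoly, smul_smul, ← sum_add_distrib, ← add_smul, mul_add, sin_add]
  congr! 2
  ring

theorem sinPoly_sin_smul (t s : ℝ) :
    sinPoly n (fun k => sin (k * s) • z k) t =
      (2⁻¹ : ℝ) • (cosPoly n z (t - s) - cosPoly n z (t + s)) := by
  simp only [sinPoly, cosPoly, smul_smul, ← sum_sub_distrib, ← sub_smul, smul_sum, mul_add,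
    mul_sub, cos_add, cos_sub]
  congr! 2
  ring

theorem integral_norm_sq_cosPoly_two_pi :
    ∫ t in 0..2 * π, ‖cosPoly n z t‖ ^ 2 = 2 * ∫ t in 0..π, ‖cosPoly n z t‖ ^ 2 :=
  Periodic.intervalIntegral_eq_two_smul_of_even (f := fun t => ‖cosPoly n z t‖ ^ 2)
    (fun t => by simp only [periodic_cosPoly n z t]) (fun t => by simp only [cosPoly_neg])
    fun _ _ => (by fun_prop : Continuous _).intervalIntegrable _ _

theorem integral_norm_sq_sinPoly_two_pi :
    ∫ t in 0..2 * π, ‖sinPoly n z t‖ ^ 2 = 2 * ∫ t in 0..π, ‖sinPoly n z t‖ ^ 2 :=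
  Periodic.intervalIntegral_eq_two_smul_of_even (f := fun t => ‖sinPoly n z t‖ ^ 2)
    (fun t => by simp only [periodic_sinPoly n z t]) (fun t => by simp only [sinPoly_neg, norm_neg])
    fun _ _ => (by fun_prop : Continuous _).intervalIntegrable _ _

theorem integral_norm_sq_sinPoly_sin_smul_le (s : ℝ) :
    ∫ t in 0..2 * π, ‖sinPoly n (fun k => sin (k * s) • z k) t‖ ^ 2 ≤
      ∫ t in 0..2 * π, ‖cosPoly n z t‖ ^ 2 := by
  have hC : Periodic (fun t => ‖cosPoly n z t‖ ^ 2) (2 * π) := fun t => by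
    simp only [periodic_cosPoly n z t]
  calc _ ≤ ∫ t in 0..2 * π, (‖cosPoly n z (t - s)‖ ^ 2 + ‖cosPoly n z (t + s)‖ ^ 2) / 2 := by
        refine intervalIntegral.integral_mono_on (by positivity)
          ((by fun_prop : Continuous _).intervalIntegrable _ _)
          ((by fun_prop : Continuous _).intervalIntegrable _ _) fun t _ => ?_
        have := norm_add_sq_le_two_mul (cosPoly n z (t - s)) (-cosPoly n z (t + s))
        rw [norm_neg, ← sub_eq_add_neg] at this
        rw [sinPoly_sin_smul, norm_smul, mul_pow, norm_inv, Real.norm_two]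
        linarith
    _ = ∫ t in 0..2 * π, ‖cosPoly n z t‖ ^ 2 := by
        rw [intervalIntegral.integral_div, intervalIntegral.integral_add
          ((by fun_prop : Continuous _).intervalIntegrable _ _)
          ((by fun_prop : Continuous _).intervalIntegrable _ _),
          hC.intervalIntegral_comp_sub_right, hC.intervalIntegral_comp_add_right]
        ring

theorem integral_norm_sq_sinPoly_le_of_cosPoly_sin_smul_le {M : ℝ}
    (hM : ∀ s, ∫ t in 0..2 * π, ‖cosPoly n (fun k => sin (k * s) • z k) t‖ ^ 2 ≤ M) :
    ∫ u in 0..2 * π, ‖sinPoly n z u‖ ^ 2 ≤ 4 * M := by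
  set Q : ℝ → ℝ → ℝ := fun s t => ‖cosPoly n (fun k => sin (k * s) • z k) t‖ ^ 2
  have hQ : Continuous (uncurry Q) := by fun_prop
  set G : ℝ → ℝ := fun s => ∫ t in 0..2 * π, Q s t
  set H : ℝ → ℝ := fun s => ∫ t in 0..2 * π, Q t s
  have hG : Continuous G :=
    intervalIntegral.continuous_parametric_intervalIntegral_of_continuous' hQ _ _
  have hH : Continuous H := intervalIntegral.continuous_parametric_intervalIntegral_of_continuous'
    (f := fun s t => Q t s) (by fun_prop) _ _
  have hGH : ∫ s in 0..2 * π, H s = ∫ s in 0..2 * π, G s :=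
    (intervalIntegral_intervalIntegral_swap <| (hQ.continuousOn.integrableOn_compact
      (isCompact_uIcc.prod isCompact_uIcc)).mono_set
      (Set.prod_mono Set.uIoc_subset_uIcc Set.uIoc_subset_uIcc)).symm
  have hS : Periodic (fun u => ‖sinPoly n z u‖ ^ 2) (2 * π) := fun u => by
    simp only [periodic_sinPoly n z u]
  have hpointwise : ∀ s, ∫ u in 0..2 * π, ‖sinPoly n z u‖ ^ 2 ≤ 2 * G s + 2 * H s := by
    intro s
    rw [← hS.intervalIntegral_comp_add_right s, ← intervalIntegral.integral_const_mul,
      ← intervalIntegral.integral_const_mul, ← intervalIntegral.integral_add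
        ((by fun_prop : Continuous _).intervalIntegrable _ _)
        ((by fun_prop : Continuous _).intervalIntegrable _ _)]
    refine intervalIntegral.integral_mono_on (by positivity)
      ((by fun_prop : Continuous _).intervalIntegrable _ _)
      ((by fun_prop : Continuous _).intervalIntegrable _ _) fun t _ => ?_
    rw [sinPoly_add, ← mul_add]
    exact norm_add_sq_le_two_mul _ _
  have h2π : 0 < 2 * π := by positivity
  refine le_of_mul_le_mul_left ?_ h2π
  calc _ = ∫ s in 0..2 * π, ∫ u in 0..2 * π, ‖sinPoly n z u‖ ^ 2 := by
        rw [intervalIntegral.integral_const, sub_zero, smul_eq_mul]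
    _ ≤ ∫ s in 0..2 * π, (2 * G s + 2 * H s) :=
        intervalIntegral.integral_mono_on h2π.le intervalIntegrable_const
          ((by fun_prop : Continuous _).intervalIntegrable _ _) fun s _ => hpointwise s
    _ = 4 * ∫ s in 0..2 * π, G s := by
        rw [intervalIntegral.integral_add ((by fun_prop : Continuous _).intervalIntegrable _ _)
          ((by fun_prop : Continuous _).intervalIntegrable _ _),
          intervalIntegral.integral_const_mul, intervalIntegral.integral_const_mul, hGH]
        ring
    _ ≤ 4 * ∫ s in 0..2 * π, M := by
        gcongr
        exact intervalIntegral.integral_mono_on h2π.le (hG.intervalIntegrable _ _)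
          intervalIntegrable_const fun s _ => hM s
    _ = 2 * π * (4 * M) := by
        rw [intervalIntegral.integral_const, sub_zero, smul_eq_mul]
        ring

end TrigPoly

end

/-- Proposition 1: `ϱ(𝒮_n,𝒞_n) ≤ 2 ϱ(𝒞_n,𝒮_n)`, in the form: any admissible constant `c`
for `ϱ(T|𝒞_n,𝒮_n)` makes `2c` admissible for `ϱ(T|𝒮_n,𝒞_n)`. -/
theorem stmt11 {X Y : Type*} [NormedAddCommGroup X] [NormedSpace ℝ X]
    [NormedAddCommGroup Y] [NormedSpace ℝ Y]
    (T : X →L[ℝ] Y) {n : ℕ} (c : ℝ) (hc : 0 ≤ c)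
    (h : ∀ y : ℕ → X,
      Real.sqrt ((2 / π) * ∫ t in (0 : ℝ)..π,
          ‖∑ k ∈ Finset.Icc 1 n, Real.cos (k * t) • T (y k)‖ ^ 2) ≤
        c * Real.sqrt ((2 / π) * ∫ t in (0 : ℝ)..π,
          ‖∑ k ∈ Finset.Icc 1 n, Real.sin (k * t) • y k‖ ^ 2))
    (x : ℕ → X) :
    Real.sqrt ((2 / π) * ∫ t in (0 : ℝ)..π,
        ‖∑ k ∈ Finset.Icc 1 n, Real.sin (k * t) • T (x k)‖ ^ 2) ≤
      2 * c * Real.sqrt ((2 / π) * ∫ t in (0 : ℝ)..π,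
        ‖∑ k ∈ Finset.Icc 1 n, Real.cos (k * t) • x k‖ ^ 2) := by
  have h2π : (0 : ℝ) < 2 / π := by positivity
  have hnonneg : ∀ f : ℝ → ℝ, 0 ≤ ∫ t in 0..π, f t ^ 2 := fun f =>
    intervalIntegral.integral_nonneg pi_pos.le fun _ _ => sq_nonneg _
  have hT : ∀ y : ℕ → X, ∫ t in 0..2 * π, ‖cosPoly n (fun k => T (y k)) t‖ ^ 2 ≤
      c ^ 2 * ∫ t in 0..2 * π, ‖sinPoly n y t‖ ^ 2 := fun y => by
    rw [integral_norm_sq_cosPoly_two_pi, integral_norm_sq_sinPoly_two_pi, mul_left_comm]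
    exact mul_le_mul_of_nonneg_left ((sqrt_mul_le_mul_sqrt_mul_iff h2π (hnonneg _) hc).1 (h y))
      zero_le_two
  have key : ∫ t in 0..2 * π, ‖sinPoly n (fun k => T (x k)) t‖ ^ 2 ≤
      4 * (c ^ 2 * ∫ t in 0..2 * π, ‖cosPoly n x t‖ ^ 2) :=
    integral_norm_sq_sinPoly_le_of_cosPoly_sin_smul_le n _ fun s => by
      simpa only [map_smul] using (hT _).trans <|
        mul_le_mul_of_nonneg_left (integral_norm_sq_sinPoly_sin_smul_le n x s) (sq_nonneg c)
  rw [integral_norm_sq_sinPoly_two_pi, integral_norm_sq_cosPoly_two_pi] at key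
  refine (sqrt_mul_le_mul_sqrt_mul_iff h2π (hnonneg _) (by positivity)).2 ?_
  change ∫ t in 0..π, ‖sinPoly n (fun k => T (x k)) t‖ ^ 2 ≤
    (2 * c) ^ 2 * ∫ t in 0..π, ‖cosPoly n x t‖ ^ 2
  linarith
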